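/- For all n ≥ 1 and 1 ≤ k ≤ n, f_{2k}·(ℓ_{2n} - 2) ≥ f_{2n}·(ℓ_{2k} - 2), i.e., the sequence (ℓ_{2m} - 2)/f_{2m} is nondecreasing in m for m ≥ 1. -/
import Mathlib


def lucas : ℕ → ℕ
  | 0 => 2
  | 1 => 1
  | n + 2 => lucas (n + 1) + lucas n

lemma lucas_add_two (n : ℕ) : lucas (n + 2) = lucas (n + 1) + lucas n := rfl

lemma key (m : ℕ) : (Nat.fib (2*m+2) : ℤ) * lucas (2*m) = (Nat.fib (2*m) : ℤ) * lucas (2*m+2) + 2 := by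
  induction m with
  | zero => norm_num [lucas]
  | succ m ih =>
    have e : 2 * (m + 1) = 2 * m + 2 := by ring
    have hf : (Nat.fib (2*m+4) : ℤ) = 3 * Nat.fib (2*m+2) - Nat.fib (2*m) := by
      have h1 := Nat.fib_add_two (n := 2*m+2)
      have h2 := Nat.fib_add_two (n := 2*m+1)
      have h3 := Nat.fib_add_two (n := 2*m)
      push_cast [h1, h2, h3]
      ring
    have hl : (lucas (2*m+4) : ℤ) = 3 * lucas (2*m+2) - lucas (2*m) := by
      have h1 := lucas_add_two (2*m+2)
      have h2 := lucas_add_two (2*m+1)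
      have h3 := lucas_add_two (2*m)
      push_cast [h1, h2, h3]
      ring
    rw [e]
    have : (2*m+2)+2 = 2*m+4 := by ring
    rw [this, hf, hl]
    linarith [ih]

lemma adj (m : ℕ) (hm : 1 ≤ m) :
    (Nat.fib (2*m) : ℤ) * ((lucas (2*(m+1)) : ℤ) - 2) ≥
      (Nat.fib (2*(m+1)) : ℤ) * ((lucas (2*m) : ℤ) - 2) := by
  have e : 2 * (m + 1) = 2 * m + 2 := by ring
  rw [e]
  have hk := key m
  have hfib : 1 ≤ (Nat.fib (2*m+1) : ℤ) := by
    exact_mod_cast Nat.fib_pos.mpr (by omega)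
  have hstep : (Nat.fib (2*m+2) : ℤ) = Nat.fib (2*m) + Nat.fib (2*m+1) := by
    exact_mod_cast Nat.fib_add_two (n := 2*m)
  nlinarith [hk, hfib, hstep]

theorem ratio_monotone (n k : ℕ) (hk : 1 ≤ k) (hkn : k ≤ n) :
    (Nat.fib (2 * k) : ℤ) * ((lucas (2 * n) : ℤ) - 2) ≥
      (Nat.fib (2 * n) : ℤ) * ((lucas (2 * k) : ℤ) - 2) := by
  induction n with
  | zero => omega
  | succ n ih =>
    rcases Nat.lt_or_ge k (n+1) with h | h
    · have hkn' : k ≤ n := by omega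
      have hn1 : 1 ≤ n := le_trans hk hkn'
      have IH := ih hkn'
      have A := adj n hn1
      have hfk : (0:ℤ) ≤ Nat.fib (2*k) := by positivity
      have hfn2 : (0:ℤ) ≤ Nat.fib (2*(n+1)) := by positivity
      have hfn : (0:ℤ) < Nat.fib (2*n) := by
        exact_mod_cast Nat.fib_pos.mpr (by omega)
      have chain : (Nat.fib (2*n) : ℤ) * ((Nat.fib (2*k) : ℤ) * ((lucas (2*(n+1)) : ℤ) - 2)) ≥
          (Nat.fib (2*n) : ℤ) * ((Nat.fib (2*(n+1)) : ℤ) * ((lucas (2*k) : ℤ) - 2)) := by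
        nlinarith [mul_le_mul_of_nonneg_left A hfk, mul_le_mul_of_nonneg_left IH hfn2]
      exact le_of_mul_le_mul_left chain hfn
    · have : k = n + 1 := by omega
      subst this
      exact le_refl _
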